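/- arXiv:2103.05299 — 6 statements merged into one kernel-verified Lean document; each statement's English description precedes it below -/
import Mathlib

section
/- Let k ∈ {1,…,n} and suppose λ*(T_k) < 0. Then for every real t with T_k ≤ t < T_{k+1} (where T_{n+1} = +∞), one has λ*(t) > 0 if and only if t > T_k*, and λ*(t) < 0 if and only if t < T_k*. -/
/-- The underlying intensity function of an exponential Hawkes process:
`λ*(t) = λ0 + Σ_{i=1}^{n} α·exp(−β(t − T_i))·𝟙{T_i ≤ t}`. -/
noncomputable def lamStar (l0 a b : ℝ) (n : ℕ) (T : ℕ → ℝ) (t : ℝ) : ℝ :=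
  l0 + ∑ i ∈ Finset.Icc 1 n, if T i ≤ t then a * Real.exp (-b * (t - T i)) else 0

/-- The restart time `T_k*`: equal to `T_k + β⁻¹·log((λ0 − λ*(T_k))/λ0)` if
`λ*(T_k) < 0`, and to `T_k` otherwise. -/
noncomputable def restart (l0 a b : ℝ) (n : ℕ) (T : ℕ → ℝ) (k : ℕ) : ℝ :=
  if lamStar l0 a b n T (T k) < 0 then
    T k + b⁻¹ * Real.log ((l0 - lamStar l0 a b n T (T k)) / l0)
  else T k

/-!
Between two consecutive events no new term enters the sum defining `λ*`, so on
`[T_k, T_{k+1})` the excess `λ*(t) - λ0` decays like `exp (-β (t - T_k))`: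
`λ*(t) = λ0 - c · exp (-β (t - T_k))` with `c = λ0 - λ*(T_k) > 0`. This is strictly
increasing in `t` and vanishes exactly at `T_k*`, which gives both equivalences.
-/

open Real

lemma lamStar_sub_eq_exp_mul {l0 a b : ℝ} {n : ℕ} {T : ℕ → ℝ} {s t : ℝ} (hst : s ≤ t)
    (hgap : ∀ i ∈ Finset.Icc 1 n, T i ≤ t → T i ≤ s) :
    lamStar l0 a b n T t - l0 = exp (-b * (t - s)) * (lamStar l0 a b n T s - l0) := by
  simp only [lamStar, add_sub_cancel_left, Finset.mul_sum, mul_ite, mul_zero]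
  refine Finset.sum_congr rfl fun i hi => ?_
  by_cases his : T i ≤ s
  · rw [if_pos (his.trans hst), if_pos his, mul_left_comm, ← exp_add]
    ring_nf
  · rw [if_neg fun hit => his (hgap i hi hit), if_neg his]

lemma apply_le_apply_of_le_lt_apply_succ {n k : ℕ} {T : ℕ → ℝ} (hT : ∀ i, i < n → T i < T (i + 1))
    (hk : k ≤ n) {t : ℝ} (htk : k < n → t < T (k + 1)) {i : ℕ} (hi : i ≤ n) (hit : T i ≤ t) :
    T i ≤ T k := by
  have hmono : MonotoneOn T (Set.Iic n) := (strictMonoOn_Iic_of_lt_succ hT).monotoneOn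
  by_contra! hki
  have hik : k < i := by
    by_contra! hik
    exact hki.not_ge (hmono (Set.mem_Iic.2 (hik.trans hk)) (Set.mem_Iic.2 hk) hik)
  have := hmono (Set.mem_Iic.2 (Nat.succ_le_of_lt (hik.trans_le hi))) (Set.mem_Iic.2 hi) hik
  linarith [htk (hik.trans_le hi)]

lemma strictMono_sub_mul_exp (l0 : ℝ) {c b : ℝ} (hc : 0 < c) (hb : 0 < b) (u : ℝ) :
    StrictMono fun t => l0 - c * exp (-b * (t - u)) := fun t₁ t₂ h => by
  have : exp (-b * (t₂ - u)) < exp (-b * (t₁ - u)) := exp_lt_exp.2 (by nlinarith)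
  simp only
  nlinarith

lemma sub_mul_exp_eq_zero {l0 c b : ℝ} (hl0 : 0 < l0) (hc : 0 < c) (hb : b ≠ 0) (u : ℝ) :
    l0 - c * exp (-b * (u + b⁻¹ * log (c / l0) - u)) = 0 := by
  have : -b * (u + b⁻¹ * log (c / l0) - u) = log (l0 / c) := by
    rw [← inv_div, log_inv]; field_simp; ring
  rw [this, exp_log (by positivity)]
  field_simp
  ring

theorem stmt3_general (l0 a b : ℝ) (hl0 : 0 < l0) (hb : 0 < b) (n : ℕ)
    (T : ℕ → ℝ) (hT : ∀ i, i < n → T i < T (i + 1))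
    (k : ℕ) (hk2 : k ≤ n)
    (hneg : lamStar l0 a b n T (T k) < 0) :
    ∀ t : ℝ, T k ≤ t → (k < n → t < T (k + 1)) →
      (0 < lamStar l0 a b n T t ↔ restart l0 a b n T k < t) ∧
      (lamStar l0 a b n T t < 0 ↔ t < restart l0 a b n T k) := by
  intro t ht htk
  set c := l0 - lamStar l0 a b n T (T k)
  have hc : 0 < c := by linarith
  set f := fun t => l0 - c * exp (-b * (t - T k))
  have hf : StrictMono f := strictMono_sub_mul_exp l0 hc hb (T k)
  have hval : lamStar l0 a b n T t = f t := by
    have := lamStar_sub_eq_exp_mul (l0 := l0) (a := a) (b := b) ht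
      fun i hi hit => apply_le_apply_of_le_lt_apply_succ hT hk2 htk (Finset.mem_Icc.1 hi).2 hit
    simp only [f, c]
    linarith
  have hzero : f (restart l0 a b n T k) = 0 := by
    rw [restart, if_pos hneg]
    exact sub_mul_exp_eq_zero hl0 hc hb.ne' (T k)
  rw [hval, ← hzero]
  exact ⟨hf.lt_iff_lt, hf.lt_iff_lt⟩

/-- If `λ*(T_k) < 0`, then for every `t` with `T_k ≤ t < T_{k+1}` (with `T_{n+1} = +∞`),
one has `λ*(t) > 0 ↔ t > T_k*` and `λ*(t) < 0 ↔ t < T_k*`. -/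
theorem stmt3 (l0 a b : ℝ) (hl0 : 0 < l0) (hb : 0 < b) (n : ℕ) (hn : 1 ≤ n)
    (T : ℕ → ℝ) (hT0 : T 0 = 0) (hT : ∀ i, i < n → T i < T (i + 1))
    (k : ℕ) (hk1 : 1 ≤ k) (hk2 : k ≤ n)
    (hneg : lamStar l0 a b n T (T k) < 0) :
    ∀ t : ℝ, T k ≤ t → (k < n → t < T (k + 1)) →
      (0 < lamStar l0 a b n T t ↔ restart l0 a b n T k < t) ∧
      (lamStar l0 a b n T t < 0 ↔ t < restart l0 a b n T k) :=
  stmt3_general l0 a b hl0 hb n T hT k hk2 hneg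
end

section
/- Let k ∈ {1,…,n}, suppose λ*(T_k) < 0 and T_k* < T_{k+1} (where T_{n+1} = +∞). Then T_k* equals the infimum of the set {t ∈ ℝ : T_k ≤ t < T_{k+1} and λ*(t) > 0}; that is, the closed-form restart time coincides with the first time after T_k at which the intensity becomes strictly positive. -/
open Real Finset

section

variable {l0 a b : ℝ} {n k : ℕ} {T : ℕ → ℝ}

theorem lamStar_eq_add_mul_exp {s t : ℝ} (hact : ∀ i ∈ Icc 1 n, T i ≤ t ↔ T i ≤ s) :
    lamStar l0 a b n T t = l0 + (lamStar l0 a b n T s - l0) * exp (-b * (t - s)) := by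
  simp only [lamStar, add_sub_cancel_left, sum_mul]
  refine congrArg (l0 + ·) (sum_congr rfl fun i hi => ?_)
  rw [if_congr (hact i hi) rfl rfl]
  split_ifs
  · rw [mul_assoc, ← exp_add]
    ring_nf
  · rw [zero_mul]

theorem le_iff_le_of_between_events (hT : ∀ i, i < n → T i < T (i + 1)) (hk : k ≤ n) {t : ℝ}
    (ht₁ : T k ≤ t) (ht₂ : k < n → t < T (k + 1)) {i : ℕ} (hi : i ≤ n) :
    T i ≤ t ↔ T i ≤ T k := by
  have hmono : MonotoneOn T (Set.Iic n) := (strictMonoOn_Iic_of_lt_succ hT).monotoneOn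
  rcases le_or_gt i k with hik | hki
  · have hTik : T i ≤ T k := hmono hi hk hik
    exact iff_of_true (hTik.trans ht₁) hTik
  · have hkn : k < n := hki.trans_le hi
    have hti : t < T i := (ht₂ hkn).trans_le (hmono (Nat.succ_le_of_lt hkn) hi hki)
    exact iff_of_false hti.not_ge (ht₁.trans_lt hti).not_ge

theorem zero_lt_add_mul_exp_iff {x s t : ℝ} (hl0 : 0 < l0) (hb : 0 < b) (hx : x < l0) :
    0 < l0 + (x - l0) * exp (-b * (t - s)) ↔ s + b⁻¹ * log ((l0 - x) / l0) < t := by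
  have hd : 0 < l0 - x := by linarith
  rw [show l0 + (x - l0) * exp (-b * (t - s)) = l0 - (l0 - x) * exp (-b * (t - s)) by ring,
    sub_pos, ← lt_div_iff₀' hd, ← lt_log_iff_exp_lt (div_pos hl0 hd), ← inv_div, log_inv,
    ← lt_sub_iff_add_lt', inv_mul_lt_iff₀ hb, neg_mul, neg_lt_neg_iff]

theorem lt_restart (hl0 : 0 < l0) (hb : 0 < b) (hneg : lamStar l0 a b n T (T k) < 0) :
    T k < restart l0 a b n T k := by
  rw [restart, if_pos hneg, lt_add_iff_pos_right]
  exact mul_pos (inv_pos.2 hb) (log_pos ((one_lt_div hl0).2 (by linarith)))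

theorem zero_lt_lamStar_iff_restart_lt (hl0 : 0 < l0) (hb : 0 < b)
    (hT : ∀ i, i < n → T i < T (i + 1)) (hk : k ≤ n) (hneg : lamStar l0 a b n T (T k) < 0)
    {t : ℝ} (ht₁ : T k ≤ t) (ht₂ : k < n → t < T (k + 1)) :
    0 < lamStar l0 a b n T t ↔ restart l0 a b n T k < t := by
  have hact : ∀ i ∈ Icc 1 n, T i ≤ t ↔ T i ≤ T k := fun i hi =>
    le_iff_le_of_between_events hT hk ht₁ ht₂ (mem_Icc.1 hi).2
  rw [lamStar_eq_add_mul_exp hact, restart, if_pos hneg,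
    zero_lt_add_mul_exp_iff hl0 hb (hneg.trans hl0)]

end

theorem stmt4_general (l0 a b : ℝ) (hl0 : 0 < l0) (hb : 0 < b) (n : ℕ)
    (T : ℕ → ℝ) (hT : ∀ i, i < n → T i < T (i + 1))
    (k : ℕ) (hk2 : k ≤ n)
    (hneg : lamStar l0 a b n T (T k) < 0)
    (hlt : k < n → restart l0 a b n T k < T (k + 1)) :
    restart l0 a b n T k
      = sInf {t : ℝ | T k ≤ t ∧ (k < n → t < T (k + 1)) ∧ 0 < lamStar l0 a b n T t} := by
  have hset : {t : ℝ | T k ≤ t ∧ (k < n → t < T (k + 1)) ∧ 0 < lamStar l0 a b n T t}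
      = {t | restart l0 a b n T k < t ∧ (k < n → t < T (k + 1))} := by
    ext t
    constructor
    · rintro ⟨ht₁, ht₂, hpos⟩
      exact ⟨(zero_lt_lamStar_iff_restart_lt hl0 hb hT hk2 hneg ht₁ ht₂).1 hpos, ht₂⟩
    · rintro ⟨hr, ht₂⟩
      have ht₁ := (lt_restart hl0 hb hneg).le.trans hr.le
      exact ⟨ht₁, ht₂, (zero_lt_lamStar_iff_restart_lt hl0 hb hT hk2 hneg ht₁ ht₂).2 hr⟩
  rw [hset]
  by_cases hkn : k < n
  · simp only [hkn, forall_const]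
    exact (csInf_Ioo (hlt hkn)).symm
  · simp only [hkn, false_implies, and_true]
    exact csInf_Ioi.symm

/-- If `λ*(T_k) < 0` and `T_k* < T_{k+1}` (with `T_{n+1} = +∞`), then `T_k*`
equals the infimum of `{t : T_k ≤ t < T_{k+1}, λ*(t) > 0}`: the closed-form restart
time coincides with the first time after `T_k` at which the intensity becomes
strictly positive. -/
theorem stmt4 (l0 a b : ℝ) (hl0 : 0 < l0) (hb : 0 < b) (n : ℕ) (hn : 1 ≤ n)
    (T : ℕ → ℝ) (hT0 : T 0 = 0) (hT : ∀ i, i < n → T i < T (i + 1))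
    (k : ℕ) (hk1 : 1 ≤ k) (hk2 : k ≤ n)
    (hneg : lamStar l0 a b n T (T k) < 0)
    (hlt : k < n → restart l0 a b n T k < T (k + 1)) :
    restart l0 a b n T k
      = sInf {t : ℝ | T k ≤ t ∧ (k < n → t < T (k + 1)) ∧ 0 < lamStar l0 a b n T t} :=
  stmt4_general l0 a b hl0 hb n T hT k hk2 hneg hlt
end

section
/- Let k ∈ {1,…,n} and let τ be a real number with T_k* ≤ τ ≤ T_{k+1} (where T_{n+1} = +∞). Then ∫_{T_k*}^{τ} λ*(u) du = λ0·(τ − T_k*) + β⁻¹·(λ*(T_k) − λ0)·(exp(−β(T_k* − T_k)) − exp(−β(τ − T_k))). -/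
/-- For `k ∈ {1,…,n}` and `τ` with `T_k* ≤ τ ≤ T_{k+1}` (with `T_{n+1} = +∞`),
`∫_{T_k*}^{τ} λ*(u) du
  = λ0·(τ − T_k*) + β⁻¹·(λ*(T_k) − λ0)·(exp(−β(T_k* − T_k)) − exp(−β(τ − T_k)))`. -/
theorem stmt5 (l0 a b : ℝ) (hl0 : 0 < l0) (hb : 0 < b) (n : ℕ) (hn : 1 ≤ n)
    (T : ℕ → ℝ) (hT0 : T 0 = 0) (hT : ∀ i, i < n → T i < T (i + 1))
    (k : ℕ) (hk1 : 1 ≤ k) (hk2 : k ≤ n)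
    (τ : ℝ) (hτ1 : restart l0 a b n T k ≤ τ) (hτ2 : k < n → τ ≤ T (k + 1)) :
    ∫ u in (restart l0 a b n T k)..τ, lamStar l0 a b n T u
      = l0 * (τ - restart l0 a b n T k)
        + b⁻¹ * (lamStar l0 a b n T (T k) - l0)
          * (Real.exp (-b * (restart l0 a b n T k - T k)) - Real.exp (-b * (τ - T k))) := by
  set s := restart l0 a b n T k with hsdef
  set L := lamStar l0 a b n T (T k) with hLdef
  have hb0 : b ≠ 0 := hb.ne'
  -- monotonicity
  have hmono : ∀ i j : ℕ, i ≤ j → j ≤ n → T i ≤ T j := by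
    intro i j hij hjn
    induction hij with
    | refl => exact le_rfl
    | @step m hm ih =>
        exact le_trans (ih (by omega)) (le_of_lt (hT m (by omega)))
  have hks : T k ≤ s := by
    rw [hsdef, restart]
    split
    · rename_i hneg
      have h1 : (1 : ℝ) ≤ (l0 - lamStar l0 a b n T (T k)) / l0 :=
        (le_div_iff₀ hl0).mpr (by linarith)
      have h2 : 0 ≤ Real.log ((l0 - lamStar l0 a b n T (T k)) / l0) := Real.log_nonneg h1
      nlinarith [inv_nonneg.mpr hb.le]
    · exact le_refl _
  have hgtk : ∀ i, k < i → i ≤ n → T k < T i := fun i hki hin =>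
    lt_of_lt_of_le (hT k (lt_of_lt_of_le hki hin)) (hmono (k+1) i hki hin)
  -- general sum reduction
  have hsum : ∀ u : ℝ, T k ≤ u → (∀ i, k < i → i ≤ n → u < T i) →
      lamStar l0 a b n T u = l0 + ∑ i ∈ Finset.Icc 1 k, a * Real.exp (-b * (u - T i)) := by
    intro u hu hlt
    rw [lamStar]
    congr 1
    rw [← Finset.sum_subset (Finset.Icc_subset_Icc_right hk2)]
    · refine Finset.sum_congr rfl fun i hi => ?_
      rw [if_pos]
      exact le_trans (hmono i k (Finset.mem_Icc.mp hi).2 hk2) hu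
    · intro i hi hni
      simp only [Finset.mem_Icc] at hi hni
      exact if_neg (not_le.mpr (hlt i (by omega) hi.2))
  have hC : L - l0 = ∑ i ∈ Finset.Icc 1 k, a * Real.exp (-b * (T k - T i)) := by
    rw [hLdef, hsum (T k) le_rfl (fun i hki hin => hgtk i hki hin)]
    ring
  -- pointwise formula
  have hpt : ∀ u : ℝ, T k ≤ u → (∀ i, k < i → i ≤ n → u < T i) →
      lamStar l0 a b n T u = l0 + (L - l0) * Real.exp (-b * (u - T k)) := by
    intro u hu hlt
    rw [hsum u hu hlt, hC, Finset.sum_mul]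
    congr 1
    refine Finset.sum_congr rfl fun i _ => ?_
    rw [mul_assoc, ← Real.exp_add]
    ring_nf
  -- a.e. equality on the interval
  have hae : ∀ᵐ u : ℝ, u ∈ Set.uIoc s τ → lamStar l0 a b n T u
      = l0 + (L - l0) * Real.exp (-b * (u - T k)) := by
    have h1 : ∀ᵐ u : ℝ, u ≠ τ := by
      refine MeasureTheory.ae_iff.mpr ?_
      simp only [not_not]
      have : {u : ℝ | u = τ} = {τ} := by ext x; simp
      rw [this]
      exact MeasureTheory.measure_singleton τ
    filter_upwards [h1] with u hu hmem
    rw [Set.uIoc_of_le hτ1] at hmem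
    have hut : u < τ := lt_of_le_of_ne hmem.2 hu
    refine hpt u (hks.trans hmem.1.le) fun i hki hin => ?_
    have hkn : k < n := lt_of_lt_of_le hki hin
    exact lt_of_lt_of_le (lt_of_lt_of_le hut (hτ2 hkn)) (hmono (k+1) i hki hin)
  rw [intervalIntegral.integral_congr_ae hae]
  have hint : ∫ u in s..τ, (l0 + (L - l0) * Real.exp (-b * (u - T k)))
      = (l0 * τ - b⁻¹ * (L - l0) * Real.exp (-b * (τ - T k)))
        - (l0 * s - b⁻¹ * (L - l0) * Real.exp (-b * (s - T k))) := by
    have := intervalIntegral.integral_eq_sub_of_hasDerivAt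
      (f := fun u => l0 * u - b⁻¹ * (L - l0) * Real.exp (-b * (u - T k)))
      (f' := fun u => l0 + (L - l0) * Real.exp (-b * (u - T k)))
      (a := s) (b := τ) ?_ ?_
    · exact this
    · intro u _
      have h1 : HasDerivAt (fun u : ℝ => -b * (u - T k)) (-b) u := by
        simpa using ((hasDerivAt_id u).sub_const (T k)).const_mul (-b)
      have h3 := (h1.exp).const_mul (b⁻¹ * (L - l0))
      have h4 := ((hasDerivAt_id u).const_mul l0).sub h3
      convert h4 using 1
      · rfl
      field_simp
      ring
    · exact (Continuous.intervalIntegrable (by fun_prop) s τ)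
  rw [hint]
  ring
end

section
/- Let k ∈ {1,…,n−1} and suppose T_k* ≤ T_{k+1}. Then ∫_{T_k}^{T_{k+1}} max(λ*(u), 0) du = λ0·(T_{k+1} − T_k*) + β⁻¹·(λ*(T_k) − λ0)·(exp(−β(T_k* − T_k)) − exp(−β(T_{k+1} − T_k))). -/
lemma integ_aux (l0 c b tk : ℝ) (hb : b ≠ 0) (s t : ℝ) :
    ∫ u in s..t, (l0 + c * Real.exp (-b * (u - tk)))
      = l0 * (t - s) + b⁻¹ * c * (Real.exp (-b * (s - tk)) - Real.exp (-b * (t - tk))) := by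
  have hder : ∀ u : ℝ, HasDerivAt (fun x => l0 * x - b⁻¹ * c * Real.exp (-b * (x - tk)))
      (l0 + c * Real.exp (-b * (u - tk))) u := by
    intro u
    have h1 : HasDerivAt (fun x : ℝ => -b * (x - tk)) (-b) u := by
      simpa using ((hasDerivAt_id u).sub_const tk).const_mul (-b)
    have h2 := (h1.exp).const_mul (b⁻¹ * c)
    have h3 : HasDerivAt (fun x : ℝ => l0 * x) l0 u := by
      simpa using (hasDerivAt_id u).const_mul l0
    refine (h3.sub h2).congr_deriv ?_
    linear_combination (c * Real.exp (-b * (u - tk))) * inv_mul_cancel₀ hb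
  rw [intervalIntegral.integral_eq_sub_of_hasDerivAt (fun u _ => hder u)
    ((Continuous.intervalIntegrable (by continuity) s t))]
  ring

lemma lam_eq_aux (l0 a b : ℝ) (n : ℕ) (T : ℕ → ℝ)
    (hT : ∀ i, i < n → T i < T (i + 1)) (k : ℕ) (hk2 : k < n)
    (u : ℝ) (hu1 : T k ≤ u) (hu2 : u < T (k + 1)) :
    lamStar l0 a b n T u
      = l0 + (lamStar l0 a b n T (T k) - l0) * Real.exp (-b * (u - T k)) := by
  have hmono : ∀ j, j ≤ n → ∀ i, i ≤ j → T i ≤ T j := by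
    intro j
    induction j with
    | zero => intro _ i hi; simp [Nat.le_zero.mp hi]
    | succ m ih =>
      intro hjn i hi
      rcases Nat.eq_or_lt_of_le hi with h | h
      · rw [h]
      · exact le_trans (ih (by omega) i (by omega)) (hT m (by omega)).le
  unfold lamStar
  rw [add_sub_cancel_left, Finset.sum_mul]
  congr 1
  refine Finset.sum_congr rfl ?_
  intro i hi
  rw [Finset.mem_Icc] at hi
  have hiff : (T i ≤ u) ↔ (T i ≤ T k) := by
    constructor
    · intro h
      by_contra hc
      push_neg at hc
      have hki : k + 1 ≤ i := by
        by_contra hki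
        exact absurd (hmono k hk2.le i (by omega)) (not_le.mpr hc)
      exact absurd (le_trans (hmono i hi.2 (k + 1) hki) h) (not_le.mpr hu2)
    · intro h; exact le_trans h hu1
  by_cases h : T i ≤ T k
  · rw [if_pos (hiff.mpr h), if_pos h, mul_assoc, ← Real.exp_add]
    ring_nf
  · rw [if_neg (fun hc => h (hiff.mp hc)), if_neg h, zero_mul]

/-- For `k ∈ {1,…,n−1}` with `T_k* ≤ T_{k+1}`,
`∫_{T_k}^{T_{k+1}} max(λ*(u), 0) du
  = λ0·(T_{k+1} − T_k*)
    + β⁻¹·(λ*(T_k) − λ0)·(exp(−β(T_k* − T_k)) − exp(−β(T_{k+1} − T_k)))`. -/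
theorem stmt6 (l0 a b : ℝ) (hl0 : 0 < l0) (hb : 0 < b) (n : ℕ) (hn : 1 ≤ n)
    (T : ℕ → ℝ) (hT0 : T 0 = 0) (hT : ∀ i, i < n → T i < T (i + 1))
    (k : ℕ) (hk1 : 1 ≤ k) (hk2 : k < n)
    (hres : restart l0 a b n T k ≤ T (k + 1)) :
    ∫ u in (T k)..(T (k + 1)), max (lamStar l0 a b n T u) 0
      = l0 * (T (k + 1) - restart l0 a b n T k)
        + b⁻¹ * (lamStar l0 a b n T (T k) - l0)
          * (Real.exp (-b * (restart l0 a b n T k - T k))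
            - Real.exp (-b * (T (k + 1) - T k))) := by
  set c : ℝ := lamStar l0 a b n T (T k) - l0 with hcdef
  set s : ℝ := restart l0 a b n T k with hsdef
  set f : ℝ → ℝ := fun u => l0 + c * Real.exp (-b * (u - T k)) with hfdef
  have hfcont : Continuous f := by
    unfold f; continuity
  have hgcont : Continuous (fun u => max (f u) 0) := hfcont.max continuous_const
  have hTk1 : T k < T (k + 1) := hT k hk2
  have hTks : T k ≤ s := by
    rw [hsdef]; unfold restart
    split_ifs with h
    · have h1 : (1 : ℝ) ≤ (l0 - lamStar l0 a b n T (T k)) / l0 := by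
        rw [le_div_iff₀ hl0]; linarith
      nlinarith [Real.log_nonneg h1, inv_pos.mpr hb]
    · exact le_refl _
  have hfseq : lamStar l0 a b n T (T k) < 0 →
      l0 + c * Real.exp (-b * (s - T k)) = 0 := by
    intro h
    have hcneg : c < -l0 := by rw [hcdef]; linarith
    have hc0 : c ≠ 0 := by linarith
    have hs : s = T k + b⁻¹ * Real.log (-c / l0) := by
      rw [hsdef]; unfold restart; rw [if_pos h, hcdef]; ring_nf
    have hkey : Real.exp (-b * (s - T k)) = l0 / (-c) := by
      rw [hs, show T k + b⁻¹ * Real.log (-c / l0) - T k = b⁻¹ * Real.log (-c / l0) by ring,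
        show -b * (b⁻¹ * Real.log (-c / l0)) = -Real.log (-c / l0) by field_simp]
      rw [Real.exp_neg, Real.exp_log (div_pos (by linarith) hl0), inv_div]
    rw [hkey]
    rw [mul_div_assoc', mul_comm c l0, mul_div_assoc, div_neg, div_self hc0]
    ring
  have hfs : 0 ≤ f s := by
    show 0 ≤ l0 + c * Real.exp (-b * (s - T k))
    rcases lt_or_ge (lamStar l0 a b n T (T k)) 0 with h | h
    · rw [hfseq h]
    · have hskk : s = T k := by
        rw [hsdef]; unfold restart; rw [if_neg (not_lt.mpr h)]
      rw [hskk]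
      simp only [sub_self, mul_zero, Real.exp_zero, mul_one]
      rw [hcdef]; linarith
  have hzero : (∫ u in (T k)..s, max (f u) 0) = 0 := by
    rcases lt_or_ge (lamStar l0 a b n T (T k)) 0 with h | h
    · have hcneg : c < 0 := by rw [hcdef]; linarith
      have hcong : ∀ u ∈ Set.uIcc (T k) s, max (f u) 0 = (fun _ : ℝ => (0:ℝ)) u := by
        intro u hu
        rw [Set.uIcc_of_le hTks] at hu
        refine max_eq_right ?_
        show l0 + c * Real.exp (-b * (u - T k)) ≤ 0
        have hle : Real.exp (-b * (s - T k)) ≤ Real.exp (-b * (u - T k)) :=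
          Real.exp_le_exp.mpr (by nlinarith [hu.2])
        have h2 : c * Real.exp (-b * (u - T k)) ≤ c * Real.exp (-b * (s - T k)) :=
          mul_le_mul_of_nonpos_left hle hcneg.le
        have h3 := hfseq h
        linarith
      rw [intervalIntegral.integral_congr hcong, intervalIntegral.integral_const, smul_zero]
    · have hskk : s = T k := by
        rw [hsdef]; unfold restart; rw [if_neg (not_lt.mpr h)]
      rw [hskk, intervalIntegral.integral_same]
  have hae : (∫ u in (T k)..(T (k + 1)), max (lamStar l0 a b n T u) 0)
      = ∫ u in (T k)..(T (k + 1)), max (f u) 0 := by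
    apply intervalIntegral.integral_congr_ae
    have hne : ∀ᵐ x : ℝ, x ≠ T (k + 1) := by
      rw [MeasureTheory.ae_iff]
      simp only [not_not, Set.setOf_eq_eq_singleton]
      exact Real.volume_singleton
    filter_upwards [hne] with x hx hmem
    rw [Set.uIoc_of_le hTk1.le] at hmem
    have hx2 : x < T (k + 1) := lt_of_le_of_ne hmem.2 hx
    rw [lam_eq_aux l0 a b n T hT k hk2 x hmem.1.le hx2]
  rw [hae, ← intervalIntegral.integral_add_adjacent_intervals
    (hgcont.intervalIntegrable (T k) s) (hgcont.intervalIntegrable s (T (k + 1))), hzero,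
    zero_add]
  have hfsbeta : 0 ≤ l0 + c * Real.exp (-b * (s - T k)) := hfs
  have hpos : ∀ u ∈ Set.uIcc s (T (k + 1)), max (f u) 0 = f u := by
    intro u hu
    rw [Set.uIcc_of_le hres] at hu
    refine max_eq_left ?_
    show 0 ≤ l0 + c * Real.exp (-b * (u - T k))
    have heu : (0:ℝ) < Real.exp (-b * (u - T k)) := Real.exp_pos _
    have hle : Real.exp (-b * (u - T k)) ≤ Real.exp (-b * (s - T k)) :=
      Real.exp_le_exp.mpr (by nlinarith [hu.1])
    have hes : (0:ℝ) < Real.exp (-b * (s - T k)) := Real.exp_pos _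
    nlinarith [mul_nonneg heu.le hfsbeta, mul_nonneg hl0.le (sub_nonneg.mpr hle)]
  rw [intervalIntegral.integral_congr hpos, hfdef]
  rw [integ_aux l0 c b (T k) hb.ne' s (T (k + 1))]
end

section
/- Suppose T_k* ≤ T_{k+1} for every k ∈ {1,…,n−1}, and let t be a real number with t ≥ T_n*. Then the compensator Λ(t) = ∫_0^t max(λ*(u), 0) du satisfies Λ(t) = λ0·T_1 + Σ_{k=1}^{n−1} [ λ0·(T_{k+1} − T_k*) + β⁻¹·(λ*(T_k) − λ0)·(exp(−β(T_k* − T_k)) − exp(−β(T_{k+1} − T_k))) ] + λ0·(t − T_n*) + β⁻¹·(λ*(T_n) − λ0)·(exp(−β(T_n* − T_n)) − exp(−β(t − T_n))). -/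
open MeasureTheory

lemma ae_ne_pt (c : ℝ) : ∀ᵐ u : ℝ, u ≠ c := by
  rw [MeasureTheory.ae_iff]; simp

lemma int_congr {f g : ℝ → ℝ} {x y : ℝ} (hxy : x ≤ y)
    (hfg : Set.EqOn f g (Set.Ioo x y)) :
    ∫ u in x..y, f u = ∫ u in x..y, g u := by
  apply intervalIntegral.integral_congr_ae
  filter_upwards [ae_ne_pt y] with u hu hmem
  rw [Set.uIoc_of_le hxy] at hmem
  exact hfg ⟨hmem.1, lt_of_le_of_ne hmem.2 hu⟩

lemma II_congr {f g : ℝ → ℝ} {x y : ℝ} (hxy : x ≤ y)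
    (hg : IntervalIntegrable g volume x y)
    (hfg : Set.EqOn f g (Set.Ioo x y)) :
    IntervalIntegrable f volume x y := by
  rw [intervalIntegrable_iff_integrableOn_Ioc_of_le hxy] at hg ⊢
  apply hg.congr
  rw [Filter.EventuallyEq, ae_restrict_iff' measurableSet_Ioc]
  filter_upwards [ae_ne_pt y] with u hu hmem
  exact (hfg ⟨hmem.1, lt_of_le_of_ne hmem.2 hu⟩).symm

lemma antider (l0 b c x y z : ℝ) (hb : b ≠ 0) :
    ∫ u in y..z, (l0 + c * Real.exp (-b*(u - x)))
      = l0*(z-y) + b⁻¹ * c * (Real.exp (-b*(y-x)) - Real.exp (-b*(z-x))) := by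
  have h : ∀ u : ℝ, HasDerivAt (fun v => l0*v - b⁻¹*c*Real.exp (-b*(v-x)))
      (l0 + c*Real.exp (-b*(u-x))) u := by
    intro u
    have h1 : HasDerivAt (fun v : ℝ => -b*(v - x)) (-b) u := by
      simpa using ((hasDerivAt_id u).sub_const x).const_mul (-b)
    have h3 := h1.exp.const_mul (b⁻¹*c)
    have h4 := (hasDerivAt_id u).const_mul l0
    refine (h4.sub h3).congr_deriv ?_
    field_simp
    ring
  rw [intervalIntegral.integral_eq_sub_of_hasDerivAt (fun u _ => h u)
    ((Continuous.intervalIntegrable (by continuity) y z))]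
  ring

lemma keyseg (l0 b lam x r s : ℝ) (hl0 : 0 < l0) (hb : 0 < b)
    (hr : r = if lam < 0 then x + b⁻¹ * Real.log ((l0 - lam)/l0) else x)
    (hrs : r ≤ s) :
    ∫ u in x..s, max (l0 + (lam - l0) * Real.exp (-b*(u - x))) 0
      = l0 * (s - r) + b⁻¹ * (lam - l0) * (Real.exp (-b*(r-x)) - Real.exp (-b*(s-x))) := by
  by_cases hlam : lam < 0
  · rw [if_pos hlam] at hr
    have hlog : 0 ≤ Real.log ((l0 - lam)/l0) :=
      Real.log_nonneg ((one_le_div hl0).2 (by linarith))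
    have hxr : x ≤ r := by
      rw [hr]; nlinarith [mul_nonneg (le_of_lt (inv_pos.2 hb)) hlog]
    have hxs : x ≤ s := hxr.trans hrs
    have hl0lam : (0:ℝ) < l0 - lam := by linarith
    have hexp : Real.exp (-b*(r-x)) = l0/(l0 - lam) := by
      rw [hr]
      have : -b * (x + b⁻¹ * Real.log ((l0 - lam)/l0) - x) = Real.log (l0/(l0-lam)) := by
        have h1 : Real.log (l0/(l0-lam)) = - Real.log ((l0-lam)/l0) := by
          rw [← Real.log_inv]; congr 1; field_simp
        rw [h1]; field_simp; ring
      rw [this, Real.exp_log (by positivity)]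
    have hneg : lam - l0 < 0 := by linarith
    have hle : ∀ u : ℝ, u ≤ r → l0 + (lam - l0) * Real.exp (-b*(u-x)) ≤ 0 := by
      intro u hu
      have h1 : Real.exp (-b*(r-x)) ≤ Real.exp (-b*(u-x)) :=
        Real.exp_le_exp.2 (by nlinarith)
      have h2 : (lam - l0) * Real.exp (-b*(u-x)) ≤ (lam - l0) * Real.exp (-b*(r-x)) :=
        mul_le_mul_of_nonpos_left h1 (le_of_lt hneg)
      have h3 : (lam - l0) * Real.exp (-b*(r-x)) = -l0 := by
        rw [hexp]; field_simp; ring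
      linarith
    have hge : ∀ u : ℝ, r ≤ u → 0 ≤ l0 + (lam - l0) * Real.exp (-b*(u-x)) := by
      intro u hu
      have h1 : Real.exp (-b*(u-x)) ≤ Real.exp (-b*(r-x)) :=
        Real.exp_le_exp.2 (by nlinarith)
      have h2 : (lam - l0) * Real.exp (-b*(r-x)) ≤ (lam - l0) * Real.exp (-b*(u-x)) :=
        mul_le_mul_of_nonpos_left h1 (le_of_lt hneg)
      have h3 : (lam - l0) * Real.exp (-b*(r-x)) = -l0 := by
        rw [hexp]; field_simp; ring
      linarith
    have hcont : Continuous fun u : ℝ => max (l0 + (lam - l0) * Real.exp (-b*(u - x))) 0 := by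
      fun_prop
    rw [← intervalIntegral.integral_add_adjacent_intervals (b := r)
      (hcont.intervalIntegrable x r) (hcont.intervalIntegrable r s)]
    have e1 : ∫ u in x..r, max (l0 + (lam - l0) * Real.exp (-b*(u - x))) 0 = 0 := by
      rw [intervalIntegral.integral_congr (g := fun _ => (0:ℝ))]
      · simp
      · intro u hu
        rw [Set.uIcc_of_le hxr] at hu
        exact max_eq_right (hle u hu.2)
    have e2 : ∫ u in r..s, max (l0 + (lam - l0) * Real.exp (-b*(u - x))) 0
        = ∫ u in r..s, (l0 + (lam - l0) * Real.exp (-b*(u - x))) := by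
      apply intervalIntegral.integral_congr
      intro u hu
      rw [Set.uIcc_of_le hrs] at hu
      exact max_eq_left (hge u hu.1)
    rw [e1, e2, antider l0 b (lam - l0) x r s (ne_of_gt hb)]
    ring
  · rw [if_neg hlam] at hr
    push_neg at hlam
    rw [hr] at hrs ⊢
    rw [intervalIntegral.integral_congr
      (g := fun u => l0 + (lam - l0) * Real.exp (-b*(u - x)))]
    · rw [antider l0 b (lam - l0) x x s (ne_of_gt hb)]
    · intro u hu
      rw [Set.uIcc_of_le hrs] at hu
      have he1 : Real.exp (-b*(u-x)) ≤ 1 := by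
        rw [Real.exp_le_one_iff]; nlinarith [hu.1]
      have he0 : 0 < Real.exp (-b*(u-x)) := Real.exp_pos _
      apply max_eq_left
      nlinarith

lemma lam_seg (l0 a b : ℝ) (n : ℕ) (T : ℕ → ℝ) (k : ℕ)
    (hmono : ∀ i, i ≤ k → T i ≤ T k)
    (hstrict : ∀ i, k < i → i ≤ n → T k < T i)
    (u : ℝ) (hu : T k ≤ u) (hu2 : ∀ i, k < i → i ≤ n → u < T i) :
    lamStar l0 a b n T u = l0 + (lamStar l0 a b n T (T k) - l0) * Real.exp (-b*(u - T k)) := by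
  unfold lamStar
  have key : ∀ w : ℝ, T k ≤ w → (∀ i, k < i → i ≤ n → w < T i) →
      (∑ i ∈ Finset.Icc 1 n, if T i ≤ w then a * Real.exp (-b * (w - T i)) else 0)
        = ∑ i ∈ Finset.Icc 1 n, if i ≤ k then a * Real.exp (-b * (w - T i)) else 0 := by
    intro w hw hw2
    apply Finset.sum_congr rfl
    intro i hi
    simp only [Finset.mem_Icc] at hi
    by_cases h : i ≤ k
    · rw [if_pos ((hmono i h).trans hw), if_pos h]
    · push_neg at h
      rw [if_neg (not_le.2 (hw2 i h hi.2)), if_neg (not_le.2 h)]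
  rw [key u hu hu2, key (T k) le_rfl hstrict]
  rw [add_sub_cancel_left, Finset.sum_mul]
  congr 1
  apply Finset.sum_congr rfl
  intro i _
  by_cases h : i ≤ k
  · rw [if_pos h, if_pos h, mul_assoc, ← Real.exp_add]
    ring_nf
  · rw [if_neg h, if_neg h, zero_mul]

lemma Tlt (n : ℕ) (T : ℕ → ℝ) (hT : ∀ i, i < n → T i < T (i + 1)) :
    ∀ i j, i < j → j ≤ n → T i < T j := by
  intro i j hij hjn
  induction j with
  | zero => omega
  | succ m ih =>
    rcases Nat.lt_succ_iff_lt_or_eq.1 hij with h | h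
    · exact (ih h (by omega)).trans (hT m (by omega))
    · subst h; exact hT i (by omega)

lemma Tle (n : ℕ) (T : ℕ → ℝ) (hT : ∀ i, i < n → T i < T (i + 1)) :
    ∀ i j, i ≤ j → j ≤ n → T i ≤ T j := by
  intro i j hij hjn
  rcases eq_or_lt_of_le hij with h | h
  · rw [h]
  · exact (Tlt n T hT i j h hjn).le

lemma restart_ge (l0 a b : ℝ) (hl0 : 0 < l0) (hb : 0 < b) (n : ℕ) (T : ℕ → ℝ) (k : ℕ) :
    T k ≤ restart l0 a b n T k := by
  unfold restart
  split
  · rename_i h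
    have hlog : 0 ≤ Real.log ((l0 - lamStar l0 a b n T (T k))/l0) :=
      Real.log_nonneg ((one_le_div hl0).2 (by linarith))
    nlinarith [mul_nonneg (le_of_lt (inv_pos.2 hb)) hlog]
  · exact le_rfl

/-- If `T_k* ≤ T_{k+1}` for every `k ∈ {1,…,n−1}` and `t ≥ T_n*`, then the compensator
`Λ(t) = ∫_0^t max(λ*(u), 0) du` satisfies the closed-form expression of
Proposition 2 (exponential kernel). -/
theorem stmt7 (l0 a b : ℝ) (hl0 : 0 < l0) (hb : 0 < b) (n : ℕ) (hn : 1 ≤ n)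
    (T : ℕ → ℝ) (hT0 : T 0 = 0) (hT : ∀ i, i < n → T i < T (i + 1))
    (hres : ∀ k, 1 ≤ k → k < n → restart l0 a b n T k ≤ T (k + 1))
    (t : ℝ) (ht : restart l0 a b n T n ≤ t) :
    ∫ u in (0 : ℝ)..t, max (lamStar l0 a b n T u) 0
      = l0 * T 1
        + ∑ k ∈ Finset.Icc 1 (n - 1),
            (l0 * (T (k + 1) - restart l0 a b n T k)
              + b⁻¹ * (lamStar l0 a b n T (T k) - l0)
                * (Real.exp (-b * (restart l0 a b n T k - T k))
                  - Real.exp (-b * (T (k + 1) - T k))))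
        + (l0 * (t - restart l0 a b n T n)
            + b⁻¹ * (lamStar l0 a b n T (T n) - l0)
              * (Real.exp (-b * (restart l0 a b n T n - T n))
                - Real.exp (-b * (t - T n)))) := by
  set f : ℝ → ℝ := fun u => max (lamStar l0 a b n T u) 0 with hf
  have hTle := Tle n T hT
  have hTlt := Tlt n T hT
  have hTn_t : T n ≤ t := (restart_ge l0 a b hl0 hb n T n).trans ht
  -- equality with constant on first piece
  have piece0 : Set.EqOn f (fun _ => l0) (Set.Ioo (T 0) (T 1)) := by
    intro u hu
    have hl : lamStar l0 a b n T u = l0 := by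
      unfold lamStar
      rw [Finset.sum_eq_zero, add_zero]
      intro i hi
      simp only [Finset.mem_Icc] at hi
      rw [if_neg (not_le.2 (lt_of_lt_of_le hu.2 (hTle 1 i hi.1 hi.2)))]
    simp only [hf, hl]
    exact max_eq_left hl0.le
  -- equality with exponential on piece k
  have pieceK : ∀ k, 1 ≤ k → k ≤ n → ∀ u, T k ≤ u → (∀ i, k < i → i ≤ n → u < T i) →
      f u = max (l0 + (lamStar l0 a b n T (T k) - l0) * Real.exp (-b*(u - T k))) 0 := by
    intro k hk1 hkn u hu hu2
    simp only [hf]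
    rw [lam_seg l0 a b n T k (fun i hi => hTle i k hi hkn)
      (fun i h1 h2 => hTlt k i h1 h2) u hu hu2]
  -- integrability on pieces
  have hInt : ∀ k, k < n → IntervalIntegrable f volume (T k) (T (k+1)) := by
    intro k hk
    rcases Nat.eq_zero_or_pos k with rfl | hk1
    · exact II_congr (hT 0 hk).le (intervalIntegrable_const) piece0
    · refine II_congr (g := fun u =>
          max (l0 + (lamStar l0 a b n T (T k) - l0) * Real.exp (-b*(u - T k))) 0)
          (hT k hk).le ((Continuous.intervalIntegrable (by fun_prop) _ _)) ?_
      intro u hu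
      exact pieceK k hk1 hk.le u hu.1.le
        (fun i h1 h2 => lt_of_lt_of_le hu.2 (hTle (k+1) i h1 h2))
  have hIntLast : IntervalIntegrable f volume (T n) t := by
    refine II_congr (g := fun u =>
        max (l0 + (lamStar l0 a b n T (T n) - l0) * Real.exp (-b*(u - T n))) 0)
        hTn_t ((Continuous.intervalIntegrable (by fun_prop) _ _)) ?_
    intro u hu
    exact pieceK n hn le_rfl u hu.1.le (fun i h1 h2 => absurd (lt_of_lt_of_le h1 h2) (lt_irrefl n))
  -- decomposition
  have hInt0n : IntervalIntegrable f volume (T 0) (T n) :=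
    IntervalIntegrable.trans_iterate hInt
  have hd1 : ∫ u in (0:ℝ)..t, f u = (∫ u in (T 0)..(T n), f u) + ∫ u in (T n)..t, f u := by
    rw [intervalIntegral.integral_add_adjacent_intervals hInt0n hIntLast, hT0]
  have hd2 : ∫ u in (T 0)..(T n), f u = ∑ k ∈ Finset.range n, ∫ u in (T k)..(T (k+1)), f u :=
    (intervalIntegral.sum_integral_adjacent_intervals hInt).symm
  -- value on first piece
  have I0 : ∫ u in (T 0)..(T 1), f u = l0 * T 1 := by
    rw [int_congr (hT 0 (by omega)).le piece0]
    simp [hT0, mul_comm]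
  -- value on piece k (k between 1 and n-1, with right end T (k+1)) and last piece
  have Igen : ∀ k, 1 ≤ k → k ≤ n → ∀ s, restart l0 a b n T k ≤ s →
      (∀ i, k < i → i ≤ n → s ≤ T i) →
      ∫ u in (T k)..s, f u
        = l0 * (s - restart l0 a b n T k)
          + b⁻¹ * (lamStar l0 a b n T (T k) - l0)
            * (Real.exp (-b * (restart l0 a b n T k - T k)) - Real.exp (-b * (s - T k))) := by
    intro k hk1 hkn s hrs hsle
    have hxr := restart_ge l0 a b hl0 hb n T k
    have hxs : T k ≤ s := hxr.trans hrs
    rw [int_congr hxs (g := fun u =>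
        max (l0 + (lamStar l0 a b n T (T k) - l0) * Real.exp (-b*(u - T k))) 0) ?_]
    · exact keyseg l0 b (lamStar l0 a b n T (T k)) (T k) (restart l0 a b n T k) s hl0 hb rfl hrs
    · intro u hu
      exact pieceK k hk1 hkn u hu.1.le
        (fun i h1 h2 => lt_of_lt_of_le hu.2 (hsle i h1 h2))
  have In : ∫ u in (T n)..t, f u
      = l0 * (t - restart l0 a b n T n)
        + b⁻¹ * (lamStar l0 a b n T (T n) - l0)
          * (Real.exp (-b * (restart l0 a b n T n - T n)) - Real.exp (-b * (t - T n))) :=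
    Igen n hn le_rfl t ht (fun i h1 h2 => absurd (lt_of_lt_of_le h1 h2) (lt_irrefl n))
  -- sum over range n
  obtain ⟨m, rfl⟩ : ∃ m, n = m + 1 := ⟨n - 1, by omega⟩
  have hrange : Finset.range (m+1) = insert 0 (Finset.Icc 1 m) := by
    ext i; simp [Nat.lt_succ_iff]; omega
  have hsum : ∑ k ∈ Finset.range (m+1), ∫ u in (T k)..(T (k+1)), f u
      = l0 * T 1 + ∑ k ∈ Finset.Icc 1 m,
          (l0 * (T (k + 1) - restart l0 a b (m+1) T k)
            + b⁻¹ * (lamStar l0 a b (m+1) T (T k) - l0)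
              * (Real.exp (-b * (restart l0 a b (m+1) T k - T k))
                - Real.exp (-b * (T (k + 1) - T k)))) := by
    rw [hrange, Finset.sum_insert (by simp)]
    rw [I0]
    congr 1
    apply Finset.sum_congr rfl
    intro k hk
    simp only [Finset.mem_Icc] at hk
    exact Igen k hk.1 (by omega) (T (k+1)) (hres k hk.1 (by omega))
      (fun i h1 h2 => hTle (k+1) i h1 h2)
  have hm : (m + 1) - 1 = m := by omega
  rw [hd1, hd2, hsum, In, hm]
end

section
/- For every k ∈ {1,…,n} (with T_{n+1} = +∞): (i) if T_k ≤ t < min(T_k*, T_{k+1}) then λ*(t) ≤ 0; (ii) if T_k* < t < T_{k+1} then λ*(t) > 0. Consequently, for almost every t ∈ [T_k, T_{k+1}), max(λ*(t), 0) = λ*(t)·𝟙{T_k* ≤ t}. -/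
/-- The underlying intensity function of a Hawkes process with general kernel `h`:
`λ*(t) = λ0 + Σ_{i=1}^{n} h(t − T_i)·𝟙{T_i ≤ t}`. -/
noncomputable def lamStarH (l0 : ℝ) (n : ℕ) (T : ℕ → ℝ) (h : ℝ → ℝ) (t : ℝ) : ℝ :=
  l0 + ∑ i ∈ Finset.Icc 1 n, if T i ≤ t then h (t - T i) else 0

/-- The restart time `T_k* = inf { t ≥ T_k : λ*(t) > 0 }`. -/
noncomputable def restartInf (l0 : ℝ) (n : ℕ) (T : ℕ → ℝ) (h : ℝ → ℝ) (k : ℕ) : ℝ :=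
  sInf {t : ℝ | T k ≤ t ∧ 0 < lamStarH l0 n T h t}

/-- For every `k ∈ {1,…,n}` (with `T_{n+1} = +∞`):
(i) if `T_k ≤ t < min(T_k*, T_{k+1})` then `λ*(t) ≤ 0`;
(ii) if `T_k* < t < T_{k+1}` then `λ*(t) > 0`;
consequently, for a.e. `t ∈ [T_k, T_{k+1})`, `max(λ*(t), 0) = λ*(t)·𝟙{T_k* ≤ t}`. -/
theorem stmt9 (l0 : ℝ) (hl0 : 0 < l0) (n : ℕ) (hn : 1 ≤ n)
    (T : ℕ → ℝ) (hT0 : T 0 = 0) (hT : ∀ i, i < n → T i < T (i + 1))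
    (h : ℝ → ℝ) (hmono : ∀ s t : ℝ, 0 ≤ s → s ≤ t → h s ≤ h t)
    (htend : Filter.Tendsto h Filter.atTop (nhds 0)) :
    ∀ k, 1 ≤ k → k ≤ n →
      (∀ t : ℝ, T k ≤ t → t < restartInf l0 n T h k → (k < n → t < T (k + 1)) →
        lamStarH l0 n T h t ≤ 0) ∧
      (∀ t : ℝ, restartInf l0 n T h k < t → (k < n → t < T (k + 1)) →
        0 < lamStarH l0 n T h t) ∧
      (∀ᵐ t : ℝ ∂MeasureTheory.volume,
        T k ≤ t → (k < n → t < T (k + 1)) →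
          max (lamStarH l0 n T h t) 0
            = if restartInf l0 n T h k ≤ t then lamStarH l0 n T h t else 0) := by
  intro k hk1 hkn
  -- monotonicity of T on [0, n]
  have hTmono : ∀ i j : ℕ, i ≤ j → j ≤ n → T i ≤ T j := by
    intro i j hij hjn
    induction j with
    | zero => simp [Nat.le_zero.mp hij]
    | succ m ih =>
      rcases Nat.lt_or_ge i (m + 1) with hlt | hge
      · have h1 : T i ≤ T m := ih (Nat.lt_succ_iff.mp hlt) (le_trans (Nat.le_succ m) hjn)
        exact le_trans h1 (le_of_lt (hT m (Nat.lt_of_succ_le hjn)))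
      · have : i = m + 1 := le_antisymm hij hge
        simp [this]
  -- the set
  set S : Set ℝ := {t : ℝ | T k ≤ t ∧ 0 < lamStarH l0 n T h t} with hS
  have hbdd : BddBelow S := ⟨T k, fun t ht => ht.1⟩
  -- lam tends to l0 at infinity
  have hlam : Filter.Tendsto (lamStarH l0 n T h) Filter.atTop (nhds l0) := by
    have hterm : ∀ i : ℕ, Filter.Tendsto (fun t : ℝ => if T i ≤ t then h (t - T i) else 0)
        Filter.atTop (nhds 0) := by
      intro i
      have h1 : Filter.Tendsto (fun t : ℝ => t - T i) Filter.atTop Filter.atTop :=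
        Filter.tendsto_atTop_add_const_right _ (-T i) Filter.tendsto_id
      have h2 : Filter.Tendsto (fun t : ℝ => h (t - T i)) Filter.atTop (nhds 0) :=
        htend.comp h1
      refine h2.congr' ?_
      filter_upwards [Filter.eventually_ge_atTop (T i)] with t ht
      simp [ht]
    have hsum : Filter.Tendsto (fun t : ℝ => ∑ i ∈ Finset.Icc 1 n,
        (if T i ≤ t then h (t - T i) else 0)) Filter.atTop (nhds 0) := by
      have := tendsto_finset_sum (Finset.Icc 1 n) (fun i _ => hterm i)
      simpa using this
    have := Filter.Tendsto.add (tendsto_const_nhds (x := l0)) hsum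
    rw [add_zero] at this; exact this
  -- S is nonempty
  have hSne : S.Nonempty := by
    have h1 : ∀ᶠ t : ℝ in Filter.atTop, 0 < lamStarH l0 n T h t :=
      hlam.eventually (eventually_gt_nhds hl0)
    have h2 : ∀ᶠ t : ℝ in Filter.atTop, T k ≤ t := Filter.eventually_ge_atTop (T k)
    rcases (h1.and h2).exists with ⟨t, ht1, ht2⟩
    exact ⟨t, ht2, ht1⟩
  have hinf_ge : T k ≤ restartInf l0 n T h k := le_csInf hSne (fun t ht => ht.1)
  -- formula on the interval
  have hform : ∀ t : ℝ, T k ≤ t → (k < n → t < T (k + 1)) →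
      lamStarH l0 n T h t = l0 + ∑ i ∈ Finset.Icc 1 k, h (t - T i) := by
    intro t ht htk
    unfold lamStarH
    congr 1
    have hzero : ∀ i ∈ Finset.Icc 1 n, i ∉ Finset.Icc 1 k →
        (if T i ≤ t then h (t - T i) else 0) = 0 := by
      intro i hin hik
      rw [Finset.mem_Icc] at hin
      rw [Finset.mem_Icc, not_and] at hik
      have h1 : k + 1 ≤ i := Nat.succ_le_of_lt (lt_of_not_ge (hik hin.1))
      have hkn' : k < n := lt_of_lt_of_le (Nat.lt_of_succ_le h1) hin.2
      have : t < T i := lt_of_lt_of_le (htk hkn') (hTmono (k + 1) i h1 hin.2)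
      exact if_neg (not_le.mpr this)
    rw [← Finset.sum_subset (Finset.Icc_subset_Icc_right hkn) hzero]
    refine Finset.sum_congr rfl fun i hi => ?_
    rw [Finset.mem_Icc] at hi
    exact if_pos (le_trans (hTmono i k hi.2 hkn) ht)
  -- monotonicity of the formula
  have hgmono : ∀ s t : ℝ, T k ≤ s → s ≤ t →
      l0 + ∑ i ∈ Finset.Icc 1 k, h (s - T i) ≤ l0 + ∑ i ∈ Finset.Icc 1 k, h (t - T i) := by
    intro s t hs hst
    have : ∀ i ∈ Finset.Icc 1 k, h (s - T i) ≤ h (t - T i) := by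
      intro i hi
      rw [Finset.mem_Icc] at hi
      have h1 : T i ≤ T k := hTmono i k hi.2 hkn
      exact hmono _ _ (by linarith) (by linarith)
    linarith [Finset.sum_le_sum this]
  -- part (i)
  have part1 : ∀ t : ℝ, T k ≤ t → t < restartInf l0 n T h k → (k < n → t < T (k + 1)) →
      lamStarH l0 n T h t ≤ 0 := by
    intro t ht hlt _
    by_contra hcon
    push_neg at hcon
    exact absurd (csInf_le hbdd ⟨ht, hcon⟩) (not_le.mpr hlt)
  -- part (ii)
  have part2 : ∀ t : ℝ, restartInf l0 n T h k < t → (k < n → t < T (k + 1)) →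
      0 < lamStarH l0 n T h t := by
    intro t hlt htk
    obtain ⟨s, hsS, hst⟩ := exists_lt_of_csInf_lt hSne hlt
    have hsk : (k < n → s < T (k + 1)) := fun hkn' => lt_trans hst (htk hkn')
    have htT : T k ≤ t := le_trans hsS.1 hst.le
    have h1 : lamStarH l0 n T h s ≤ lamStarH l0 n T h t := by
      rw [hform s hsS.1 hsk, hform t htT htk]
      exact hgmono s t hsS.1 hst.le
    exact lt_of_lt_of_le hsS.2 h1
  refine ⟨part1, part2, ?_⟩
  have hae : ∀ᵐ t : ℝ ∂MeasureTheory.volume, t ≠ restartInf l0 n T h k := by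
    rw [MeasureTheory.ae_iff]
    have : {t : ℝ | ¬ t ≠ restartInf l0 n T h k} = {restartInf l0 n T h k} := by
      ext t; simp
    rw [this]
    exact MeasureTheory.measure_singleton _
  filter_upwards [hae] with t hne ht htk
  rcases lt_trichotomy t (restartInf l0 n T h k) with h1 | h2 | h3
  · rw [if_neg (not_le.mpr h1), max_eq_right (part1 t ht h1 htk)]
  · exact absurd h2 hne
  · rw [if_pos h3.le, max_eq_left (part2 t h3 htk).le]
end
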